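/- arXiv:1901.01137 — 8 statements merged into one kernel-verified Lean document; each statement's English description precedes it below -/
import Mathlib

section
/- Let X and Y be jointly distributed random variables each taking finitely many values, with joint probabilities p(xᵢ,yⱼ), marginals p(xᵢ) = Σⱼ p(xᵢ,yⱼ) and p(yⱼ) = Σᵢ p(xᵢ,yⱼ), and conditional probabilities p(xᵢ|yⱼ) = p(xᵢ,yⱼ)/p(yⱼ) whenever p(yⱼ) > 0. If 0 < ϖ ≤ 2, then the message importance loss is nonnegative: Φ_ϖ(X||Y) = L(ϖ,X) − L(ϖ,X|Y) ≥ 0. -/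
/-!
The loss is nonnegative by Jensen's inequality for `f(p) = p e^{ϖ(1-p)}`, which is concave on
`p ≤ 1` when `0 ≤ ϖ ≤ 2`: each marginal `p(xᵢ) = ∑ⱼ p(yⱼ) p(xᵢ|yⱼ)` is a `p(y)`-mixture of
conditionals, so `∑ⱼ p(yⱼ) f(p(xᵢ|yⱼ)) ≤ f(p(xᵢ))`, and summing over `i` gives
`L(ϖ,X|Y) ≤ L(ϖ,X)`.
-/

open Finset Real

/-- `L(ϖ, P) = ∑ i, importanceTerm ϖ (P i)`. -/
noncomputable def importanceTerm (ϖ p : ℝ) : ℝ := p * exp (ϖ * (1 - p))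

lemma hasDerivAt_exp_mul_one_sub (ϖ x : ℝ) :
    HasDerivAt (fun p => exp (ϖ * (1 - p))) (-ϖ * exp (ϖ * (1 - x))) x := by
  have h : HasDerivAt (fun p : ℝ => ϖ * (1 - p)) (-ϖ) x := by
    simpa using ((hasDerivAt_id x).const_sub 1).const_mul ϖ
  exact h.exp.congr_deriv (by ring)

lemma hasDerivAt_importanceTerm (ϖ x : ℝ) :
    HasDerivAt (importanceTerm ϖ) (exp (ϖ * (1 - x)) * (1 - ϖ * x)) x :=
  ((hasDerivAt_id' x).mul (hasDerivAt_exp_mul_one_sub ϖ x)).congr_deriv (by ring)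

lemma hasDerivAt_deriv_importanceTerm (ϖ x : ℝ) :
    HasDerivAt (fun p => exp (ϖ * (1 - p)) * (1 - ϖ * p))
      (-ϖ * exp (ϖ * (1 - x)) * (2 - ϖ * x)) x := by
  have h : HasDerivAt (fun p : ℝ => 1 - ϖ * p) (-ϖ) x := by
    simpa using ((hasDerivAt_id x).const_mul ϖ).const_sub 1
  exact ((hasDerivAt_exp_mul_one_sub ϖ x).mul h).congr_deriv (by ring)

/-- The second derivative `-ϖ e^{ϖ(1-x)} (2 - ϖx)` is nonpositive as long as `ϖx ≤ 2`,
which holds for `x ≤ 1` once `0 ≤ ϖ ≤ 2`. -/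
theorem concaveOn_importanceTerm {ϖ : ℝ} (hϖ : 0 ≤ ϖ) (hϖ2 : ϖ ≤ 2) :
    ConcaveOn ℝ (Set.Iic 1) (importanceTerm ϖ) := by
  refine concaveOn_of_hasDerivWithinAt2_nonpos (convex_Iic 1)
    (fun x _ => (hasDerivAt_importanceTerm ϖ x).continuousAt.continuousWithinAt)
    (fun x _ => (hasDerivAt_importanceTerm ϖ x).hasDerivWithinAt)
    (fun x _ => (hasDerivAt_deriv_importanceTerm ϖ x).hasDerivWithinAt) fun x hx => ?_
  rw [interior_Iic, Set.mem_Iio] at hx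
  have hϖx : 0 ≤ 2 - ϖ * x := by nlinarith
  have := mul_nonneg (mul_nonneg hϖ (exp_pos (ϖ * (1 - x))).le) hϖx
  linarith

theorem ConcaveOn.sum_mul_sum_le_sum_sum {ι κ : Type*} [Fintype ι] [Fintype κ] {s : Set ℝ}
    {f : ℝ → ℝ} (hf : ConcaveOn ℝ s f) {w : κ → ℝ} (hw₀ : ∀ j, 0 ≤ w j) (hw₁ : ∑ j, w j = 1)
    {c : ι → κ → ℝ} (hc : ∀ i j, c i j ∈ s) :
    ∑ j, w j * ∑ i, f (c i j) ≤ ∑ i, f (∑ j, w j * c i j) := by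
  simp_rw [mul_sum]
  rw [sum_comm]
  exact sum_le_sum fun i _ => hf.le_map_sum (fun j _ => hw₀ j) hw₁ fun j _ => hc i j

/-- This holds also when the marginal vanishes: then `q i j / 0 = 0`, but `q i j = 0` too. -/
lemma sum_mul_div_sum_eq {ι κ : Type*} [Fintype ι] {q : ι → κ → ℝ} (hq : ∀ i j, 0 ≤ q i j)
    (i : ι) (j : κ) : (∑ k, q k j) * (q i j / ∑ k, q k j) = q i j := by
  by_cases h : ∑ k, q k j = 0
  · rw [h, zero_mul, (sum_eq_zero_iff_of_nonneg fun k _ => hq k j).1 h i (mem_univ i)]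
  · exact mul_div_cancel₀ _ h

/-- For jointly distributed finite random variables `X, Y` with joint
probabilities `q i j`, marginals `p(xᵢ) = ∑ⱼ q i j` and `p(yⱼ) = ∑ᵢ q i j`, and conditional
probabilities `p(xᵢ|yⱼ) = q i j / p(yⱼ)`, if `0 < ϖ ≤ 2` then the message importance loss
`Φ_ϖ(X‖Y) = L(ϖ,X) − L(ϖ,X|Y)` is nonnegative. -/
theorem message_importance_loss_nonneg {m n : ℕ} (ϖ : ℝ) (hϖ : 0 < ϖ) (hϖ2 : ϖ ≤ 2)
    (q : Fin m → Fin n → ℝ) (hq : ∀ i j, 0 ≤ q i j)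
    (hsum : ∑ i, ∑ j, q i j = 1) :
    (∑ i, (∑ j, q i j) * Real.exp (ϖ * (1 - ∑ j, q i j)))
      - (∑ j, (∑ i, q i j) *
          ∑ i, (q i j / ∑ k, q k j) * Real.exp (ϖ * (1 - q i j / ∑ k, q k j))) ≥ 0 := by
  have hpy₀ : ∀ j, 0 ≤ ∑ i, q i j := fun j => sum_nonneg fun i _ => hq i j
  have hpy₁ : ∑ j, ∑ i, q i j = 1 := by rw [sum_comm, hsum]
  have hcond_le : ∀ i j, q i j / ∑ k, q k j ∈ Set.Iic 1 := fun i j =>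
    div_le_one_of_le₀ (single_le_sum (fun k _ => hq k j) (mem_univ i)) (hpy₀ j)
  have jensen := (concaveOn_importanceTerm hϖ.le hϖ2).sum_mul_sum_le_sum_sum hpy₀ hpy₁ hcond_le
  simp only [sum_mul_div_sum_eq hq, importanceTerm] at jensen
  exact sub_nonneg.2 jensen
end

section
/- Let 0 < ϖ < 2 and 0 ≤ β ≤ 1. For a binary input X with distribution (p, 1−p), p ∈ (0,1), passed through the binary symmetric transfer matrix p(y|x) with entries p(y=x̄|x) = β and p(y=x|x) = 1−β, let Φ_ϖ(p) = L(ϖ,X) − L(ϖ,X|Y) denote the message importance loss, where the conditional probabilities p(x|y) are computed by Bayes' rule. Then the maximum of Φ_ϖ(p) over p ∈ (0,1) is attained at p = 1/2, and the maximal value (the message importance loss capacity) equals C(ϖ,β) = exp(ϖ/2) − [β·exp(ϖ(1−β)) + (1−β)·exp(ϖβ)]. -/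
/-!
Write `l = ϖ/2` and `R_q(c) = q e^c + (1-q) e^{-c}`. Then `L(ϖ,X) = e^l R_p(l(1-2p))`, and the
four posterior exponents `ϖ(1 - p(x|y))` are `l ± a ± b` for explicit `a, b`, so the conditional
term factorizes as `L(ϖ,X|Y) = e^l R_p(a) R_β(b)`. For `p, β ≤ 1/2` one has `0 ≤ a ≤ l(1-2p)` and
`0 ≤ b ≤ l(1-2β)`, and `R_q` is antitone on `[0, 1-2q]` (this is where `ϖ ≤ 2` enters, through
`e^x ≤ (2+x)/(2-x)`). Hence with `X = R_p(l(1-2p)) ≤ min(R_p(a), 1)` and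
`Y = R_β(l(1-2β)) ≤ min(R_β(b), 1)`, the loss is at most `e^l (X - XY) ≤ e^l (1 - Y)`, which is
its value at `p = 1/2`. The symmetries `p ↦ 1-p`, `β ↦ 1-β` remove the restriction to `≤ 1/2`.
-/

open Real

noncomputable def twoPointMGF (q c : ℝ) : ℝ := q * exp c + (1 - q) * exp (-c)

lemma twoPointMGF_zero (q : ℝ) : twoPointMGF q 0 = 1 := by simp [twoPointMGF]

lemma twoPointMGF_nonneg {q : ℝ} (hq0 : 0 ≤ q) (hq1 : q ≤ 1) (c : ℝ) : 0 ≤ twoPointMGF q c := by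
  unfold twoPointMGF
  have := sub_nonneg.2 hq1
  positivity

lemma twoPointMGF_sub_twoPointMGF (q c c' : ℝ) :
    twoPointMGF q c - twoPointMGF q c' = (exp c - exp c') * (q - (1 - q) * exp (-(c + c'))) := by
  simp only [twoPointMGF, neg_add, exp_add, exp_neg]
  field_simp
  ring

lemma twoPointMGF_le_of_le {q c c' : ℝ} (hcc' : c' ≤ c) (h : q * exp (c + c') ≤ 1 - q) :
    twoPointMGF q c ≤ twoPointMGF q c' := by
  have hfac : q - (1 - q) * exp (-(c + c')) ≤ 0 := by
    rw [exp_neg, ← div_eq_mul_inv, sub_nonpos, le_div_iff₀ (exp_pos _)]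
    exact h
  have := mul_nonpos_of_nonneg_of_nonpos (sub_nonneg.2 (exp_le_exp.2 hcc')) hfac
  linarith [twoPointMGF_sub_twoPointMGF q c c']

lemma mul_exp_two_mul_one_sub_two_mul_le {q : ℝ} (hq0 : 0 ≤ q) (hq : q ≤ 1 / 2) :
    q * exp (2 * (1 - 2 * q)) ≤ 1 - q := by
  rcases hq0.eq_or_lt with rfl | hq0
  · simp
  have h := exp_le_two_add_div_two_sub (x := 2 * (1 - 2 * q)) (by linarith) (by linarith)
  rw [show (2 + 2 * (1 - 2 * q)) / (2 - 2 * (1 - 2 * q)) = (1 - q) / q by field_simp; ring,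
    le_div_iff₀ hq0] at h
  linarith

lemma twoPointMGF_antitoneOn {q : ℝ} (hq0 : 0 ≤ q) (hq : q ≤ 1 / 2) :
    AntitoneOn (twoPointMGF q) (Set.Icc 0 (1 - 2 * q)) := by
  intro c' hc' c hc hcc'
  refine twoPointMGF_le_of_le hcc' ?_
  calc q * exp (c + c') ≤ q * exp (2 * (1 - 2 * q)) := by
        gcongr
        linarith [hc.2, hc'.2]
    _ ≤ 1 - q := mul_exp_two_mul_one_sub_two_mul_le hq0 hq

lemma twoPointMGF_le_twoPointMGF_mul {q l t : ℝ} (hq0 : 0 ≤ q) (hq : q ≤ 1 / 2)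
    (hl0 : 0 ≤ l) (hl1 : l ≤ 1) (ht0 : 0 ≤ t) (ht1 : t ≤ 1) :
    twoPointMGF q (l * (1 - 2 * q)) ≤ twoPointMGF q (l * (1 - 2 * q) * t) := by
  have hc0 : 0 ≤ l * (1 - 2 * q) := mul_nonneg hl0 (by linarith)
  have hc1 : l * (1 - 2 * q) ≤ 1 - 2 * q := mul_le_of_le_one_left (by linarith) hl1
  have hct : l * (1 - 2 * q) * t ≤ l * (1 - 2 * q) := mul_le_of_le_one_right hc0 ht1
  exact twoPointMGF_antitoneOn hq0 hq ⟨mul_nonneg hc0 ht0, hct.trans hc1⟩ ⟨hc0, hc1⟩ hct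

lemma mul_exp_add_mul_exp_eq (ϖ q : ℝ) :
    q * exp (ϖ * (1 - q)) + (1 - q) * exp (ϖ * q)
      = exp (ϖ / 2) * twoPointMGF q (ϖ / 2 * (1 - 2 * q)) := by
  rw [twoPointMGF, mul_add, ← mul_assoc, ← mul_assoc, mul_comm (exp _) q,
    mul_comm (exp _) (1 - q), mul_assoc, mul_assoc, ← exp_add, ← exp_add]
  ring_nf

lemma sum_four_mul_exp_eq (p β l a b : ℝ) :
    p * (1 - β) * exp (l + (a - b)) + (1 - p) * β * exp (l + (-a + b))
      + p * β * exp (l + (a + b)) + (1 - p) * (1 - β) * exp (l + (-a - b))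
      = exp l * (twoPointMGF p a * twoPointMGF β b) := by
  simp only [twoPointMGF, sub_eq_add_neg, exp_add, exp_neg]
  ring

noncomputable def bscImportanceLoss (ϖ β p : ℝ) : ℝ :=
  (p * exp (ϖ * (1 - p)) + (1 - p) * exp (ϖ * p))
    - (p * (1 - β) * exp (ϖ * (1 - p * (1 - β) / (p * (1 - β) + (1 - p) * β)))
      + (1 - p) * β * exp (ϖ * (1 - (1 - p) * β / (p * (1 - β) + (1 - p) * β)))
      + p * β * exp (ϖ * (1 - p * β / (p * β + (1 - p) * (1 - β))))
      + (1 - p) * (1 - β) *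
        exp (ϖ * (1 - (1 - p) * (1 - β) / (p * β + (1 - p) * (1 - β)))))

lemma bscImportanceLoss_one_sub_crossover (ϖ β p : ℝ) :
    bscImportanceLoss ϖ (1 - β) p = bscImportanceLoss ϖ β p := by
  unfold bscImportanceLoss; ring_nf

lemma bscImportanceLoss_one_sub_input (ϖ β p : ℝ) :
    bscImportanceLoss ϖ β (1 - p) = bscImportanceLoss ϖ β p := by
  unfold bscImportanceLoss; ring_nf

def bscOutputVariance (β p : ℝ) : ℝ :=
  (p * (1 - β) + (1 - p) * β) * (p * β + (1 - p) * (1 - β))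

lemma bscOutputVariance_eq_left (β p : ℝ) :
    bscOutputVariance β p = β * (1 - β) + p * (1 - p) * (1 - 2 * β) ^ 2 := by
  unfold bscOutputVariance; ring

lemma bscOutputVariance_eq_right (β p : ℝ) :
    bscOutputVariance β p = p * (1 - p) + β * (1 - β) * (1 - 2 * p) ^ 2 := by
  unfold bscOutputVariance; ring

lemma bscImportanceLoss_eq_exp_mul (ϖ : ℝ) {β p : ℝ} (hβ0 : 0 ≤ β) (hβ1 : β ≤ 1)
    (hp0 : 0 < p) (hp1 : p < 1) :
    bscImportanceLoss ϖ β p = exp (ϖ / 2) *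
      (twoPointMGF p (ϖ / 2 * (1 - 2 * p))
        - twoPointMGF p (ϖ / 2 * (1 - 2 * p) * (β * (1 - β) / bscOutputVariance β p))
          * twoPointMGF β (ϖ / 2 * (1 - 2 * β) * (p * (1 - p) / bscOutputVariance β p))) := by
  have hq1 : 0 < 1 - p := sub_pos.2 hp1
  have hy0 : p * (1 - β) + (1 - p) * β ≠ 0 := by
    nlinarith [mul_nonneg (mul_nonneg hp0.le hp0.le) (sub_nonneg.2 hβ1),
      mul_nonneg (mul_nonneg hq1.le hq1.le) hβ0, mul_pos hp0 hq1]
  have hy1 : p * β + (1 - p) * (1 - β) ≠ 0 := by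
    nlinarith [mul_nonneg (mul_nonneg hp0.le hp0.le) hβ0,
      mul_nonneg (mul_nonneg hq1.le hq1.le) (sub_nonneg.2 hβ1), mul_pos hp0 hq1]
  have hD : bscOutputVariance β p =
      (p * (1 - β) + (1 - p) * β) * (p * β + (1 - p) * (1 - β)) := rfl
  set a := ϖ / 2 * (1 - 2 * p) * (β * (1 - β) / bscOutputVariance β p)
  set b := ϖ / 2 * (1 - 2 * β) * (p * (1 - p) / bscOutputVariance β p)
  -- `field_simp` only clears the denominators once the output probabilities are atoms.
  generalize hY0 : p * (1 - β) + (1 - p) * β = y0 at hD hy0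
  generalize hY1 : p * β + (1 - p) * (1 - β) = y1 at hD hy1
  have e00 : ϖ * (1 - p * (1 - β) / y0) = ϖ / 2 + (a - b) := by
    simp only [a, b, hD]; field_simp; rw [← hY0, ← hY1]; ring
  have e10 : ϖ * (1 - (1 - p) * β / y0) = ϖ / 2 + (-a + b) := by
    simp only [a, b, hD]; field_simp; rw [← hY0, ← hY1]; ring
  have e01 : ϖ * (1 - p * β / y1) = ϖ / 2 + (a + b) := by
    simp only [a, b, hD]; field_simp; rw [← hY0, ← hY1]; ring
  have e11 : ϖ * (1 - (1 - p) * (1 - β) / y1) = ϖ / 2 + (-a - b) := by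
    simp only [a, b, hD]; field_simp; rw [← hY0, ← hY1]; ring
  rw [mul_sub, ← mul_exp_add_mul_exp_eq, ← sum_four_mul_exp_eq, bscImportanceLoss, hY0, hY1,
    e00, e10, e01, e11]

lemma bscImportanceLoss_half (ϖ : ℝ) {β : ℝ} (hβ0 : 0 ≤ β) (hβ1 : β ≤ 1) :
    bscImportanceLoss ϖ β (1 / 2) = exp (ϖ / 2) * (1 - twoPointMGF β (ϖ / 2 * (1 - 2 * β))) := by
  rw [bscImportanceLoss_eq_exp_mul ϖ hβ0 hβ1 (by norm_num) (by norm_num),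
    bscOutputVariance_eq_right]
  norm_num [twoPointMGF_zero]

lemma bscImportanceLoss_le_half_of_le_half {ϖ β p : ℝ} (hϖ0 : 0 ≤ ϖ) (hϖ2 : ϖ ≤ 2)
    (hβ0 : 0 ≤ β) (hβ : β ≤ 1 / 2) (hp0 : 0 < p) (hp : p ≤ 1 / 2) :
    bscImportanceLoss ϖ β p ≤ bscImportanceLoss ϖ β (1 / 2) := by
  rw [bscImportanceLoss_eq_exp_mul ϖ hβ0 (by linarith) hp0 (by linarith),
    bscImportanceLoss_half ϖ hβ0 (by linarith)]
  have hβ' : 0 ≤ 1 - β := by linarith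
  have hp' : 0 < 1 - p := by linarith
  have hD : 0 < bscOutputVariance β p := by
    rw [bscOutputVariance_eq_right]; positivity
  have hl0 : 0 ≤ ϖ / 2 := by linarith
  have hl1 : ϖ / 2 ≤ 1 := by linarith
  set X := twoPointMGF p (ϖ / 2 * (1 - 2 * p))
  set Y := twoPointMGF β (ϖ / 2 * (1 - 2 * β))
  set A := twoPointMGF p (ϖ / 2 * (1 - 2 * p) * (β * (1 - β) / bscOutputVariance β p))
  set B := twoPointMGF β (ϖ / 2 * (1 - 2 * β) * (p * (1 - p) / bscOutputVariance β p))
  have hXA : X ≤ A := twoPointMGF_le_twoPointMGF_mul hp0.le hp hl0 hl1 (by positivity) <|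
    (div_le_one hD).2 <| by
      rw [bscOutputVariance_eq_left]; exact le_add_of_nonneg_right (by positivity)
  have hYB : Y ≤ B := twoPointMGF_le_twoPointMGF_mul hβ0 hβ hl0 hl1 (by positivity) <|
    (div_le_one hD).2 <| by
      rw [bscOutputVariance_eq_right]; exact le_add_of_nonneg_right (by positivity)
  have hX1 : X ≤ 1 := by
    simpa [twoPointMGF_zero] using
      twoPointMGF_le_twoPointMGF_mul hp0.le hp hl0 hl1 le_rfl zero_le_one
  have hY1 : Y ≤ 1 := by
    simpa [twoPointMGF_zero] using
      twoPointMGF_le_twoPointMGF_mul hβ0 hβ hl0 hl1 le_rfl zero_le_one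
  have hA0 : 0 ≤ A := twoPointMGF_nonneg hp0.le (by linarith) _
  have hY0 : 0 ≤ Y := twoPointMGF_nonneg hβ0 (by linarith) _
  refine mul_le_mul_of_nonneg_left ?_ (exp_pos _).le
  nlinarith [mul_le_mul hXA hYB hY0 hA0, mul_nonneg (sub_nonneg.2 hX1) (sub_nonneg.2 hY1)]

lemma bscImportanceLoss_le_half {ϖ β p : ℝ} (hϖ0 : 0 ≤ ϖ) (hϖ2 : ϖ ≤ 2)
    (hβ0 : 0 ≤ β) (hβ1 : β ≤ 1) (hp0 : 0 < p) (hp1 : p < 1) :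
    bscImportanceLoss ϖ β p ≤ bscImportanceLoss ϖ β (1 / 2) := by
  wlog hβ : β ≤ 1 / 2 generalizing β
  · simpa only [bscImportanceLoss_one_sub_crossover] using
      this (β := 1 - β) (by linarith) (by linarith) (by linarith)
  wlog hp : p ≤ 1 / 2 generalizing p
  · simpa only [bscImportanceLoss_one_sub_input] using
      this (p := 1 - p) (by linarith) (by linarith) (by linarith)
  exact bscImportanceLoss_le_half_of_le_half hϖ0 hϖ2 hβ0 hβ hp0 hp

/-- For the binary symmetric transfer matrix with parameter `β` and a
Bernoulli(`p`) input, the message importance loss `Φ_ϖ(p) = L(ϖ,X) − L(ϖ,X|Y)` (with the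
conditional probabilities `p(x|y)` computed by Bayes' rule) is maximized over `p ∈ (0,1)`
at `p = 1/2`, and the maximal value (the message importance loss capacity) is
`C(ϖ,β) = exp(ϖ/2) − [β·exp(ϖ(1−β)) + (1−β)·exp(ϖβ)]`. -/
theorem milc_binary_symmetric (ϖ β : ℝ) (hϖ : 0 < ϖ) (hϖ2 : ϖ < 2)
    (hβ0 : 0 ≤ β) (hβ1 : β ≤ 1) (Φ : ℝ → ℝ)
    (hΦ : ∀ p : ℝ,
      Φ p = (p * Real.exp (ϖ * (1 - p)) + (1 - p) * Real.exp (ϖ * p))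
        - (p * (1 - β) *
            Real.exp (ϖ * (1 - p * (1 - β) / (p * (1 - β) + (1 - p) * β)))
          + (1 - p) * β *
            Real.exp (ϖ * (1 - (1 - p) * β / (p * (1 - β) + (1 - p) * β)))
          + p * β *
            Real.exp (ϖ * (1 - p * β / (p * β + (1 - p) * (1 - β))))
          + (1 - p) * (1 - β) *
            Real.exp (ϖ * (1 - (1 - p) * (1 - β) / (p * β + (1 - p) * (1 - β)))))) :
    IsMaxOn Φ (Set.Ioo (0:ℝ) 1) (1/2) ∧
    Φ (1/2) = Real.exp (ϖ / 2)
        - (β * Real.exp (ϖ * (1 - β)) + (1 - β) * Real.exp (ϖ * β)) := by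
  obtain rfl : Φ = bscImportanceLoss ϖ β := funext hΦ
  refine ⟨fun p hp => bscImportanceLoss_le_half hϖ.le hϖ2.le hβ0 hβ1 hp.1 hp.2, ?_⟩
  rw [bscImportanceLoss_half ϖ hβ0 hβ1, mul_sub, mul_one, mul_exp_add_mul_exp_eq]
end

section
/- Let 0 < ϖ < 2 and 0 ≤ β ≤ 1. For a binary input X with distribution (p, 1−p), p ∈ (0,1), passed through the binary erasure transfer matrix with p(y=x|x) = 1−β and p(y=e|x) = β (erasure symbol e), let Φ_ϖ(p) = L(ϖ,X) − L(ϖ,X|Y) denote the message importance loss. Then the maximum of Φ_ϖ(p) over p ∈ (0,1) is attained at p = 1/2, and the maximal value (the message importance loss capacity) equals C(ϖ,β) = (1−β)·(exp(ϖ/2) − 1). -/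
/-!
On the output symbols `0` and `1` the input is known, so those terms of the conditional MIM
contribute `(1 - β)`; on the erasure symbol the posterior equals the prior, so those terms
contribute `β · L(ϖ, X)`. Hence `Φ_ϖ(p) = (1 - β) (L(ϖ, X) - 1)` and everything reduces to
maximizing the binary MIM `p e^{ϖ(1-p)} + (1-p) e^{ϖp}`. Writing `a = e^{ϖ(p - 1/2)}` this is
`e^{ϖ/2} (p/a + (1-p) a)`, and `p/a + (1-p) a ≤ 1` because `a - 1` and `(1-p) a - p` have
opposite signs; for `p ≤ 1/2` the second one is nonnegative by `a ≥ 1 + ϖ(p - 1/2) ≥ 2p`,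
which is where `ϖ ≤ 2` enters.
-/

open Real

noncomputable def binaryMIM (ϖ p : ℝ) : ℝ :=
  p * exp (ϖ * (1 - p)) + (1 - p) * exp (ϖ * p)

lemma binaryMIM_one_sub (ϖ p : ℝ) : binaryMIM ϖ (1 - p) = binaryMIM ϖ p := by
  simp only [binaryMIM, sub_sub_cancel]
  ring

lemma binaryMIM_half (ϖ : ℝ) : binaryMIM ϖ (1 / 2) = exp (ϖ / 2) := by
  simp only [binaryMIM]
  ring_nf

lemma mul_inv_add_mul_le_one {a p : ℝ} (ha : 0 < a) (ha1 : a ≤ 1) (hpa : p ≤ (1 - p) * a) :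
    p * a⁻¹ + (1 - p) * a ≤ 1 := by
  have key : p * a⁻¹ + (1 - p) * a - 1 = (a - 1) * ((1 - p) * a - p) / a := by
    field_simp
    ring
  have : (a - 1) * ((1 - p) * a - p) / a ≤ 0 :=
    div_nonpos_of_nonpos_of_nonneg (mul_nonpos_of_nonpos_of_nonneg (by linarith) (by linarith))
      ha.le
  linarith

lemma binaryMIM_le_of_le_half {ϖ p : ℝ} (hϖ : 0 ≤ ϖ) (hϖ2 : ϖ ≤ 2) (hp0 : 0 ≤ p)
    (hp : p ≤ 1 / 2) : binaryMIM ϖ p ≤ exp (ϖ / 2) := by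
  set a := exp (ϖ * (p - 1 / 2))
  have ha : 0 < a := exp_pos _
  have ha1 : a ≤ 1 := exp_le_one_iff.mpr (mul_nonpos_of_nonneg_of_nonpos hϖ (by linarith))
  have h2p : 2 * p ≤ a := by nlinarith [add_one_le_exp (ϖ * (p - 1 / 2))]
  have hpa : p ≤ (1 - p) * a := by nlinarith
  have hsplit : binaryMIM ϖ p = exp (ϖ / 2) * (p * a⁻¹ + (1 - p) * a) := by
    have h1 : exp (ϖ * (1 - p)) = exp (ϖ / 2) * a⁻¹ := by
      rw [← exp_neg, ← exp_add]; ring_nf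
    have h2 : exp (ϖ * p) = exp (ϖ / 2) * a := by
      rw [← exp_add]; ring_nf
    rw [binaryMIM, h1, h2]
    ring
  rw [hsplit]
  exact mul_le_of_le_one_right (exp_pos _).le (mul_inv_add_mul_le_one ha ha1 hpa)

lemma binaryMIM_le {ϖ p : ℝ} (hϖ : 0 ≤ ϖ) (hϖ2 : ϖ ≤ 2) (hp0 : 0 ≤ p) (hp1 : p ≤ 1) :
    binaryMIM ϖ p ≤ exp (ϖ / 2) := by
  rcases le_total p (1 / 2) with hp | hp
  · exact binaryMIM_le_of_le_half hϖ hϖ2 hp0 hp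
  · rw [← binaryMIM_one_sub]
    exact binaryMIM_le_of_le_half hϖ hϖ2 (by linarith) (by linarith)

lemma mul_apply_div_self (x : ℝ) (f : ℝ → ℝ) : x * f (x / x) = x * f 1 := by
  rcases eq_or_ne x 0 with rfl | hx
  · simp
  · rw [div_self hx]

lemma mul_mul_apply_mul_div (a β : ℝ) (f : ℝ → ℝ) : a * β * f (a * β / β) = a * β * f a := by
  rcases eq_or_ne β 0 with rfl | hβ
  · simp
  · rw [mul_div_cancel_right₀ a hβ]

theorem milc_binary_erasure_general (ϖ β : ℝ) (hϖ : 0 < ϖ) (hϖ2 : ϖ < 2)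
    (hβ1 : β ≤ 1) (Φ : ℝ → ℝ)
    (hΦ : ∀ p : ℝ,
      Φ p = (p * Real.exp (ϖ * (1 - p)) + (1 - p) * Real.exp (ϖ * p))
        - (p * (1 - β) *
            Real.exp (ϖ * (1 - p * (1 - β) / (p * (1 - β))))
          + (1 - p) * (1 - β) *
            Real.exp (ϖ * (1 - (1 - p) * (1 - β) / ((1 - p) * (1 - β))))
          + p * β *
            Real.exp (ϖ * (1 - p * β / (p * β + (1 - p) * β)))
          + (1 - p) * β *
            Real.exp (ϖ * (1 - (1 - p) * β / (p * β + (1 - p) * β))))) :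
    IsMaxOn Φ (Set.Ioo (0:ℝ) 1) (1/2) ∧
    Φ (1/2) = (1 - β) * (Real.exp (ϖ / 2) - 1) := by
  have hΦ_eq : ∀ p, Φ p = (1 - β) * (binaryMIM ϖ p - 1) := by
    intro p
    have hβ : p * β + (1 - p) * β = β := by ring
    rw [hΦ, hβ, mul_apply_div_self (p * (1 - β)) fun t ↦ exp (ϖ * (1 - t)),
      mul_apply_div_self ((1 - p) * (1 - β)) fun t ↦ exp (ϖ * (1 - t)),
      mul_mul_apply_mul_div p β fun t ↦ exp (ϖ * (1 - t)),
      mul_mul_apply_mul_div (1 - p) β fun t ↦ exp (ϖ * (1 - t))]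
    simp only [binaryMIM, sub_self, mul_zero, exp_zero, sub_sub_cancel]
    ring
  have hmax : Φ (1 / 2) = (1 - β) * (exp (ϖ / 2) - 1) := by
    rw [hΦ_eq, binaryMIM_half]
  refine ⟨fun p hp ↦ ?_, hmax⟩
  rw [Set.mem_ofPred_eq, hmax, hΦ_eq]
  exact mul_le_mul_of_nonneg_left
    (sub_le_sub_right (binaryMIM_le hϖ.le hϖ2.le hp.1.le hp.2.le) 1) (by linarith)

/-- For the binary erasure transfer matrix with erasure probability `β` and a
Bernoulli(`p`) input, the message importance loss `Φ_ϖ(p) = L(ϖ,X) − L(ϖ,X|Y)` (with the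
conditional probabilities computed by Bayes' rule, the output taking values `0`, `1`, `e`)
is maximized over `p ∈ (0,1)` at `p = 1/2`, with maximal value (the message importance
loss capacity) `C(ϖ,β) = (1−β)·(exp(ϖ/2) − 1)`. -/
theorem milc_binary_erasure (ϖ β : ℝ) (hϖ : 0 < ϖ) (hϖ2 : ϖ < 2)
    (hβ0 : 0 ≤ β) (hβ1 : β ≤ 1) (Φ : ℝ → ℝ)
    (hΦ : ∀ p : ℝ,
      Φ p = (p * Real.exp (ϖ * (1 - p)) + (1 - p) * Real.exp (ϖ * p))
        - (p * (1 - β) *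
            Real.exp (ϖ * (1 - p * (1 - β) / (p * (1 - β))))
          + (1 - p) * (1 - β) *
            Real.exp (ϖ * (1 - (1 - p) * (1 - β) / ((1 - p) * (1 - β))))
          + p * β *
            Real.exp (ϖ * (1 - p * β / (p * β + (1 - p) * β)))
          + (1 - p) * β *
            Real.exp (ϖ * (1 - (1 - p) * β / (p * β + (1 - p) * β))))) :
    IsMaxOn Φ (Set.Ioo (0:ℝ) 1) (1/2) ∧
    Φ (1/2) = (1 - β) * (Real.exp (ϖ / 2) - 1) :=
  milc_binary_erasure_general ϖ β hϖ hϖ2 hβ1 Φ hΦ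
end

section
/- Let K ≥ 2, 0 ≤ β ≤ 1 and 0 < ϖ < 2. Suppose Y takes K values with an arbitrary distribution (p(y₁),…,p(y_K)) and the backward transfer matrix is strongly symmetric: p(xᵢ|yᵢ) = 1−β and p(xᵢ|yⱼ) = β/(K−1) for i ≠ j, with p(xᵢ) = Σⱼ p(yⱼ)p(xᵢ|yⱼ). Then: (a) the conditional message importance measure equals L(ϖ,X|Y) = (1−β)·exp(ϖβ) + β·exp(ϖ(1−β/(K−1))) regardless of the distribution of Y; and (b) the maximum over distributions of Y of the message importance loss Φ_ϖ(X||Y) = L(ϖ,X) − L(ϖ,X|Y) is attained when Y (and hence X) is uniform, with value C(ϖ,β) = exp(ϖ(K−1)/K) − [(1−β)·exp(ϖβ) + β·exp(ϖ(1−β/(K−1)))]. -/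
/-!
Every column of a strongly symmetric matrix is a rearrangement of `(1 - β, β/(K-1), …, β/(K-1))`,
so the conditional MIM given `Y = yⱼ` is the same for every `j`, and hence equals the CMIM.
For the loss, `p ↦ p * exp (ϖ * (1 - p))` has second derivative `ϖ (ϖ p - 2) exp (ϖ (1 - p))`,
so it is concave on `[0, 1]` when `0 ≤ ϖ ≤ 2`; Jensen's inequality then bounds the MIM of any
distribution by that of the uniform one. The matrix is doubly stochastic, so uniform `Y` makes
`X` uniform and the bound is attained.
-/

open Finset

lemma sum_ite_eq_add_card_sub_one_mul {ι : Type*} [Fintype ι] [DecidableEq ι] (j : ι) (a b : ℝ) :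
    ∑ i, (if i = j then a else b) = a + ((Fintype.card ι : ℝ) - 1) * b := by
  rw [Fintype.sum_eq_add_sum_compl j, if_pos rfl,
    sum_congr rfl fun i hi => if_neg (by simpa using hi), sum_const, card_compl, card_singleton,
    nsmul_eq_mul, Nat.cast_sub (Fintype.card_pos_iff.2 ⟨j⟩), Nat.cast_one]

lemma concaveOn_mul_exp_mul_one_sub {ϖ : ℝ} (hϖ : 0 ≤ ϖ) (hϖ2 : ϖ ≤ 2) :
    ConcaveOn ℝ (Set.Icc 0 1) fun p => p * Real.exp (ϖ * (1 - p)) := by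
  have hexp (p : ℝ) :
      HasDerivAt (fun q => Real.exp (ϖ * (1 - q))) (-ϖ * Real.exp (ϖ * (1 - p))) p := by
    simpa [mul_comm] using (((hasDerivAt_id p).const_sub 1).const_mul ϖ).exp
  have hf' (p : ℝ) : HasDerivAt (fun q => q * Real.exp (ϖ * (1 - q)))
      ((1 - ϖ * p) * Real.exp (ϖ * (1 - p))) p :=
    ((hasDerivAt_id' p).mul (hexp p)).congr_deriv (by ring)
  have hf'' (p : ℝ) : HasDerivAt (fun q => (1 - ϖ * q) * Real.exp (ϖ * (1 - q)))
      (ϖ * (ϖ * p - 2) * Real.exp (ϖ * (1 - p))) p :=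
    ((((hasDerivAt_id' p).const_mul ϖ).const_sub 1).mul (hexp p)).congr_deriv (by ring)
  refine concaveOn_of_hasDerivWithinAt2_nonpos (convex_Icc 0 1)
    (fun p _ => (hf' p).continuousAt.continuousWithinAt)
    (fun p _ => (hf' p).hasDerivWithinAt) (fun p _ => (hf'' p).hasDerivWithinAt) fun p hp => ?_
  rw [interior_Icc] at hp
  have : ϖ * p - 2 ≤ 0 := by nlinarith [hp.1, hp.2]
  exact mul_nonpos_of_nonpos_of_nonneg (mul_nonpos_of_nonneg_of_nonpos hϖ this) (Real.exp_pos _).le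

noncomputable def mim {ι : Type*} [Fintype ι] (ϖ : ℝ) (p : ι → ℝ) : ℝ :=
  ∑ i, p i * Real.exp (ϖ * (1 - p i))

section Mim

variable {ι : Type*} [Fintype ι]

lemma mim_uniform [Nonempty ι] (ϖ : ℝ) :
    mim ϖ (fun _ : ι => 1 / (Fintype.card ι : ℝ)) =
      Real.exp (ϖ * ((Fintype.card ι : ℝ) - 1) / Fintype.card ι) := by
  have hn : (Fintype.card ι : ℝ) ≠ 0 := by positivity
  rw [mim, sum_const, card_univ, nsmul_eq_mul, ← mul_assoc, mul_one_div_cancel hn, one_mul]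
  congr 1
  field_simp

lemma mim_le_mim_uniform {ϖ : ℝ} (hϖ : 0 ≤ ϖ) (hϖ2 : ϖ ≤ 2) {p : ι → ℝ} (hp : ∀ i, 0 ≤ p i)
    (hsum : ∑ i, p i = 1) :
    mim ϖ p ≤ mim ϖ (fun _ : ι => 1 / (Fintype.card ι : ℝ)) := by
  have : Nonempty ι := by
    by_contra h
    simp [not_nonempty_iff.1 h] at hsum
  rw [mim_uniform]
  set n : ℝ := (Fintype.card ι : ℝ)
  have hn : 0 < n := by positivity
  have hp1 (i : ι) : p i ≤ 1 := hsum ▸ single_le_sum (fun j _ => hp j) (mem_univ i)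
  have hjensen := (concaveOn_mul_exp_mul_one_sub hϖ hϖ2).le_map_sum (t := univ)
    (w := fun _ => 1 / n) (p := p) (fun _ _ => by positivity)
    (by rw [sum_const, card_univ, nsmul_eq_mul, mul_one_div_cancel hn.ne'])
    (fun i _ => ⟨hp i, hp1 i⟩)
  simp only [smul_eq_mul, ← mul_sum, hsum, mul_one] at hjensen
  calc mim ϖ p ≤ Real.exp (ϖ * (1 - 1 / n)) := le_of_mul_le_mul_left hjensen (by positivity)
    _ = Real.exp (ϖ * (n - 1) / n) := by congr 1; field_simp

end Mim

lemma sum_sum_mul_eq_one {ι κ : Type*} [Fintype ι] [Fintype κ] {p : κ → ℝ} {W : ι → κ → ℝ}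
    (hp : ∑ j, p j = 1) (hW : ∀ j, ∑ i, W i j = 1) : ∑ i, ∑ j, p j * W i j = 1 := by
  rw [sum_comm]
  simp only [← mul_sum, hW, mul_one, hp]

def IsStronglySymmetric {K : ℕ} (β : ℝ) (W : Fin K → Fin K → ℝ) : Prop :=
  ∀ i j, W i j = if i = j then 1 - β else β / ((K : ℝ) - 1)

namespace IsStronglySymmetric

variable {K : ℕ} {β : ℝ} {W : Fin K → Fin K → ℝ}

lemma symm (hW : IsStronglySymmetric β W) (i j : Fin K) : W i j = W j i := by
  rw [hW i j, hW j i]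
  simp only [eq_comm]

lemma sum_apply_col (hW : IsStronglySymmetric β W) (g : ℝ → ℝ) (j : Fin K) :
    ∑ i, g (W i j) = g (1 - β) + ((K : ℝ) - 1) * g (β / ((K : ℝ) - 1)) := by
  simp only [hW _ j, apply_ite g]
  rw [sum_ite_eq_add_card_sub_one_mul, Fintype.card_fin]

lemma sum_col (hW : IsStronglySymmetric β W) (hK : 2 ≤ K) (j : Fin K) : ∑ i, W i j = 1 := by
  have : (K : ℝ) - 1 ≠ 0 := sub_ne_zero.2 (Nat.cast_ne_one.2 (by omega))
  calc ∑ i, W i j = 1 - β + ((K : ℝ) - 1) * (β / ((K : ℝ) - 1)) := hW.sum_apply_col id j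
    _ = 1 := by rw [mul_div_cancel₀ _ this, sub_add_cancel]

lemma sum_row (hW : IsStronglySymmetric β W) (hK : 2 ≤ K) (i : Fin K) : ∑ j, W i j = 1 := by
  simpa only [hW.symm i] using hW.sum_col hK i

lemma nonneg (hW : IsStronglySymmetric β W) (hβ0 : 0 ≤ β) (hβ1 : β ≤ 1) (i j : Fin K) :
    0 ≤ W i j := by
  rw [hW]
  split_ifs
  · linarith
  · exact div_nonneg hβ0 (sub_nonneg.2 (Nat.one_le_cast.2 i.pos))

lemma mim_col (hW : IsStronglySymmetric β W) (hK : 2 ≤ K) (ϖ : ℝ) (j : Fin K) :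
    mim ϖ (fun i => W i j) =
      (1 - β) * Real.exp (ϖ * β) + β * Real.exp (ϖ * (1 - β / ((K : ℝ) - 1))) := by
  have : (K : ℝ) - 1 ≠ 0 := sub_ne_zero.2 (Nat.cast_ne_one.2 (by omega))
  rw [mim, hW.sum_apply_col (fun p => p * Real.exp (ϖ * (1 - p))), sub_sub_cancel,
    ← mul_assoc, mul_div_cancel₀ _ this]

end IsStronglySymmetric

/-- For `K ≥ 2`, `0 ≤ β ≤ 1`, `0 < ϖ < 2`, an arbitrary distribution `py` of
`Y` on `K` symbols and the strongly symmetric backward matrix `W i j = p(xᵢ|yⱼ)`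
(`1−β` on the diagonal, `β/(K−1)` off-diagonal), with `p(xᵢ) = ∑ⱼ p(yⱼ)p(xᵢ|yⱼ)`:
(a) the CMIM equals `(1−β)·exp(ϖβ) + β·exp(ϖ(1−β/(K−1)))` regardless of `py`;
(b) the message importance loss is at most
`C(ϖ,β) = exp(ϖ(K−1)/K) − [(1−β)·exp(ϖβ) + β·exp(ϖ(1−β/(K−1)))]`, with equality for the
uniform distribution. -/
theorem milc_strongly_symmetric (K : ℕ) (hK : 2 ≤ K) (ϖ β : ℝ)
    (hϖ : 0 < ϖ) (hϖ2 : ϖ < 2) (hβ0 : 0 ≤ β) (hβ1 : β ≤ 1)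
    (py : Fin K → ℝ) (hpy : ∀ j, 0 ≤ py j) (hsum : ∑ j, py j = 1)
    (W : Fin K → Fin K → ℝ)
    (hW : ∀ i j, W i j = if i = j then 1 - β else β / ((K : ℝ) - 1)) :
    (∑ j, py j * ∑ i, W i j * Real.exp (ϖ * (1 - W i j)))
        = (1 - β) * Real.exp (ϖ * β)
            + β * Real.exp (ϖ * (1 - β / ((K : ℝ) - 1))) ∧
    (∑ i, (∑ j, py j * W i j) * Real.exp (ϖ * (1 - ∑ j, py j * W i j)))
          - ((1 - β) * Real.exp (ϖ * β)
              + β * Real.exp (ϖ * (1 - β / ((K : ℝ) - 1))))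
      ≤ Real.exp (ϖ * ((K : ℝ) - 1) / K)
          - ((1 - β) * Real.exp (ϖ * β)
              + β * Real.exp (ϖ * (1 - β / ((K : ℝ) - 1)))) ∧
    (∑ i : Fin K, (∑ j : Fin K, (1 / (K : ℝ)) * W i j) *
            Real.exp (ϖ * (1 - ∑ j : Fin K, (1 / (K : ℝ)) * W i j)))
          - ((1 - β) * Real.exp (ϖ * β)
              + β * Real.exp (ϖ * (1 - β / ((K : ℝ) - 1))))
      = Real.exp (ϖ * ((K : ℝ) - 1) / K)
          - ((1 - β) * Real.exp (ϖ * β)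
              + β * Real.exp (ϖ * (1 - β / ((K : ℝ) - 1)))) := by
  have hW : IsStronglySymmetric β W := hW
  have : Nonempty (Fin K) := ⟨⟨0, by omega⟩⟩
  have hmim_uniform : mim ϖ (fun _ : Fin K => 1 / (K : ℝ)) = Real.exp (ϖ * ((K : ℝ) - 1) / K) := by
    simpa only [Fintype.card_fin] using mim_uniform (ι := Fin K) ϖ
  refine ⟨?_, ?_, ?_⟩
  · change ∑ j, py j * mim ϖ (fun i => W i j) = _
    simp only [hW.mim_col hK, ← sum_mul, hsum, one_mul]
  · change mim ϖ (fun i => ∑ j, py j * W i j) - _ ≤ _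
    have hpx : ∀ i, 0 ≤ ∑ j, py j * W i j := fun i =>
      sum_nonneg fun j _ => mul_nonneg (hpy j) (hW.nonneg hβ0 hβ1 i j)
    have hmax := mim_le_mim_uniform hϖ.le hϖ2.le hpx (sum_sum_mul_eq_one hsum (hW.sum_col hK))
    rw [Fintype.card_fin, hmim_uniform] at hmax
    linarith
  · have hpx : (fun i => ∑ j, 1 / (K : ℝ) * W i j) = fun _ => 1 / (K : ℝ) := by
      simp only [← mul_sum, hW.sum_row hK, mul_one]
    change mim ϖ (fun i => ∑ j, 1 / (K : ℝ) * W i j) - _ = _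
    rw [hpx, hmim_uniform]
end

section
/- Let 0 < ϖ < 2 and let (p₁,…,pₙ) be a probability distribution on n ≥ 1 outcomes (pᵢ ≥ 0, Σpᵢ = 1). Then the message importance measure satisfies Σᵢ pᵢ·exp(ϖ(1−pᵢ)) ≤ exp(ϖ(n−1)/n), with equality if and only if the distribution is uniform (pᵢ = 1/n for all i). -/
/-!
The map `x ↦ x * exp (ϖ * (1 - x))` has second derivative `-ϖ (2 - ϖ x) exp (ϖ (1 - x))`,
so for `ϖ > 0` it is strictly concave on `(-∞, 2 / ϖ]`, which contains `[0, 1]` when `ϖ < 2`.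
The message importance measure is the sum of this map over the `pᵢ`, so Jensen's inequality with
uniform weights bounds it by `n` times its value at the mean `1 / n`, which is
`exp (ϖ (n - 1) / n)`, and strict concavity makes the uniform distribution the only equality case.
-/

open Finset

section UniformJensen

variable {ι : Type*} [Fintype ι] {s : Set ℝ} {f : ℝ → ℝ} {x : ι → ℝ}

theorem ConcaveOn.sum_le_card_mul_map_average [Nonempty ι] (hf : ConcaveOn ℝ s f)
    (hx : ∀ i, x i ∈ s) :
    ∑ i, f (x i) ≤ Fintype.card ι * f ((∑ i, x i) / Fintype.card ι) := by
  have hc : (0 : ℝ) < Fintype.card ι := by exact_mod_cast Fintype.card_pos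
  have hw : ∑ _i : ι, (Fintype.card ι : ℝ)⁻¹ = 1 := by simp [hc.ne']
  have h := hf.le_map_sum (fun _ _ => (inv_pos.2 hc).le) hw fun i _ => hx i
  rwa [← smul_sum, ← smul_sum, smul_eq_mul, smul_eq_mul, inv_mul_eq_div, inv_mul_eq_div,
    div_le_iff₀ hc, mul_comm] at h

theorem StrictConcaveOn.sum_eq_card_mul_map_average_iff [Nonempty ι] (hf : StrictConcaveOn ℝ s f)
    (hx : ∀ i, x i ∈ s) :
    ∑ i, f (x i) = Fintype.card ι * f ((∑ i, x i) / Fintype.card ι) ↔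
      ∀ i, x i = (∑ j, x j) / Fintype.card ι := by
  have hc : (0 : ℝ) < Fintype.card ι := by exact_mod_cast Fintype.card_pos
  have hw : ∑ _i : ι, (Fintype.card ι : ℝ)⁻¹ = 1 := by simp [hc.ne']
  have h := hf.map_sum_eq_iff_of_pos (fun _ _ => inv_pos.2 hc) hw fun i _ => hx i
  rw [← smul_sum, ← smul_sum, smul_eq_mul, smul_eq_mul, inv_mul_eq_div, inv_mul_eq_div, eq_comm,
    div_eq_iff hc.ne', mul_comm] at h
  rw [h]
  constructor
  · intro hconst i
    have hsum : ∑ j, x j = Fintype.card ι * x i := by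
      rw [Fintype.sum_congr _ _ fun j => hconst (mem_univ j) (mem_univ i), sum_const, card_univ,
        nsmul_eq_mul]
    rw [hsum, mul_div_cancel_left₀ _ hc.ne']
  · intro hmean j _ k _
    rw [hmean j, hmean k]

end UniformJensen

theorem hasDerivAt_mul_exp_mul_one_sub (ϖ x : ℝ) :
    HasDerivAt (fun x => x * Real.exp (ϖ * (1 - x)))
      ((1 - ϖ * x) * Real.exp (ϖ * (1 - x))) x := by
  have hexp := (((hasDerivAt_id' x).const_sub 1).const_mul ϖ).exp
  refine ((hasDerivAt_id' x).fun_mul hexp).congr_deriv ?_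
  ring

theorem hasDerivAt_one_sub_mul_mul_exp_mul_one_sub (ϖ x : ℝ) :
    HasDerivAt (fun x => (1 - ϖ * x) * Real.exp (ϖ * (1 - x)))
      (-(ϖ * (2 - ϖ * x) * Real.exp (ϖ * (1 - x)))) x := by
  have hexp := (((hasDerivAt_id' x).const_sub 1).const_mul ϖ).exp
  refine ((((hasDerivAt_id' x).const_mul ϖ).const_sub 1).fun_mul hexp).congr_deriv ?_
  ring

theorem strictConcaveOn_mul_exp_mul_one_sub {ϖ : ℝ} (hϖ : 0 < ϖ) :
    StrictConcaveOn ℝ (Set.Iic (2 / ϖ)) fun x => x * Real.exp (ϖ * (1 - x)) := by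
  refine strictConcaveOn_of_deriv2_neg (convex_Iic _) (by fun_prop) fun x hx => ?_
  rw [interior_Iic, Set.mem_Iio, lt_div_iff₀ hϖ, mul_comm] at hx
  have hderiv : deriv (fun x => x * Real.exp (ϖ * (1 - x))) =
      fun x => (1 - ϖ * x) * Real.exp (ϖ * (1 - x)) :=
    funext fun y => (hasDerivAt_mul_exp_mul_one_sub ϖ y).deriv
  rw [Function.iterate_succ_apply, Function.iterate_one, hderiv,
    (hasDerivAt_one_sub_mul_mul_exp_mul_one_sub ϖ x).deriv, neg_lt_zero]
  exact mul_pos (mul_pos hϖ (sub_pos.2 hx)) (Real.exp_pos _)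

/-- For `0 < ϖ < 2` and any probability distribution `(p₁,…,pₙ)` on `n ≥ 1`
outcomes, the message importance measure satisfies
`∑ᵢ pᵢ·exp(ϖ(1−pᵢ)) ≤ exp(ϖ(n−1)/n)`, with equality iff the distribution is uniform. -/
theorem mim_max_uniform (n : ℕ) (hn : 1 ≤ n) (ϖ : ℝ) (hϖ : 0 < ϖ) (hϖ2 : ϖ < 2)
    (p : Fin n → ℝ) (hp : ∀ i, 0 ≤ p i) (hsum : ∑ i, p i = 1) :
    (∑ i, p i * Real.exp (ϖ * (1 - p i))) ≤ Real.exp (ϖ * ((n : ℝ) - 1) / n) ∧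
    ((∑ i, p i * Real.exp (ϖ * (1 - p i))) = Real.exp (ϖ * ((n : ℝ) - 1) / n)
      ↔ ∀ i, p i = 1 / n) := by
  have : Nonempty (Fin n) := ⟨⟨0, hn⟩⟩
  have hconc := strictConcaveOn_mul_exp_mul_one_sub hϖ
  have hmem : ∀ i, p i ∈ Set.Iic (2 / ϖ) := fun i =>
    calc p i ≤ ∑ j, p j := single_le_sum (fun j _ => hp j) (mem_univ i)
      _ = 1 := hsum
      _ ≤ 2 / ϖ := by rw [le_div_iff₀ hϖ]; linarith
  have hvalue : (n : ℝ) * (1 / n * Real.exp (ϖ * (1 - 1 / n))) =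
      Real.exp (ϖ * ((n : ℝ) - 1) / n) := by field_simp
  have hjensen := hconc.concaveOn.sum_le_card_mul_map_average hmem
  have hequality := hconc.sum_eq_card_mul_map_average_iff hmem
  simp only [hsum, Fintype.card_fin] at hjensen hequality
  rw [hvalue] at hjensen hequality
  exact ⟨hjensen, hequality⟩
end

section
/- Let K ≥ 2 and 0 < ϖ < 2. The function C(ϖ,β) = exp(ϖ(K−1)/K) − (1−β)·exp(ϖβ) − β·exp(ϖ(1−β/(K−1))) of β ∈ [0,1] has positive second derivative in β (namely ϖ(2−(1−β)ϖ)·exp(ϖβ) + (ϖ/(K−1))·(2 − ϖβ/(K−1))·exp(ϖ(1−β/(K−1))) > 0), so it is strictly convex in β, and it attains its minimum value 0 at β = (K−1)/K. -/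
/-!
The second derivative in `β` is a sum of two terms `a(β)·exp(…)` whose coefficients are
positive on `[0, 1]` as soon as `ϖ < 2` and `K - 1 ≥ 1`; hence `C(ϖ, ·)` is strictly convex
there. At `β₀ = (K-1)/K` both exponents equal `ϖβ₀`, because `1 - β₀/(K-1) = β₀`; this makes
`C(ϖ, β₀) = 0` and `∂C/∂β (ϖ, β₀) = 0`, and a convex function is minimal at an interior
critical point.
-/

/-- The message importance loss capacity of the strongly symmetric backward matrix with
`K` symbols and crossover parameter `β`, under MIM parameter `ϖ`. -/
noncomputable def milcStronglySymmetric (K : ℕ) (ϖ β : ℝ) : ℝ :=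
  Real.exp (ϖ * ((K : ℝ) - 1) / K) - (1 - β) * Real.exp (ϖ * β)
    - β * Real.exp (ϖ * (1 - β / ((K : ℝ) - 1)))

open Real Set

noncomputable def milcStronglySymmetricDeriv (K : ℕ) (ϖ β : ℝ) : ℝ :=
  (1 - (1 - β) * ϖ) * exp (ϖ * β)
    + (β * ϖ / ((K : ℝ) - 1) - 1) * exp (ϖ * (1 - β / ((K : ℝ) - 1)))

noncomputable def milcStronglySymmetricDeriv2 (K : ℕ) (ϖ β : ℝ) : ℝ :=
  ϖ * (2 - (1 - β) * ϖ) * exp (ϖ * β)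
    + (ϖ / ((K : ℝ) - 1)) * (2 - ϖ * β / ((K : ℝ) - 1)) *
        exp (ϖ * (1 - β / ((K : ℝ) - 1)))

lemma sub_one_div_div_sub_one {k : ℝ} (hk : k ≠ 0) (hk₁ : k - 1 ≠ 0) :
    (k - 1) / k / (k - 1) = 1 - (k - 1) / k := by
  field_simp
  ring

section

variable (K : ℕ) (ϖ : ℝ)

lemma hasDerivAt_milcStronglySymmetric (β : ℝ) :
    HasDerivAt (milcStronglySymmetric K ϖ) (milcStronglySymmetricDeriv K ϖ β) β := by
  have hexp₁ := ((hasDerivAt_id β).const_mul ϖ).exp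
  have hexp₂ := ((((hasDerivAt_id β).div_const ((K : ℝ) - 1)).const_sub 1).const_mul ϖ).exp
  have h := ((hasDerivAt_const β (exp (ϖ * ((K : ℝ) - 1) / K))).sub
    (((hasDerivAt_id β).const_sub 1).mul hexp₁)).sub ((hasDerivAt_id β).mul hexp₂)
  refine h.congr_deriv ?_
  simp only [milcStronglySymmetricDeriv, id_eq]
  ring

lemma hasDerivAt_milcStronglySymmetricDeriv (β : ℝ) :
    HasDerivAt (milcStronglySymmetricDeriv K ϖ) (milcStronglySymmetricDeriv2 K ϖ β) β := by
  have hexp₁ := ((hasDerivAt_id β).const_mul ϖ).exp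
  have hexp₂ := ((((hasDerivAt_id β).div_const ((K : ℝ) - 1)).const_sub 1).const_mul ϖ).exp
  have hcoef₁ := (((hasDerivAt_id β).const_sub 1).mul_const ϖ).const_sub 1
  have hcoef₂ := (((hasDerivAt_id β).mul_const ϖ).div_const ((K : ℝ) - 1)).sub_const 1
  refine ((hcoef₁.mul hexp₁).add (hcoef₂.mul hexp₂)).congr_deriv ?_
  simp only [milcStronglySymmetricDeriv2, id_eq]
  ring

lemma deriv_milcStronglySymmetric :
    deriv (milcStronglySymmetric K ϖ) = milcStronglySymmetricDeriv K ϖ :=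
  funext fun β => (hasDerivAt_milcStronglySymmetric K ϖ β).deriv

lemma deriv_deriv_milcStronglySymmetric :
    deriv (deriv (milcStronglySymmetric K ϖ)) = milcStronglySymmetricDeriv2 K ϖ := by
  rw [deriv_milcStronglySymmetric]
  exact funext fun β => (hasDerivAt_milcStronglySymmetricDeriv K ϖ β).deriv

variable {K ϖ}

lemma milcStronglySymmetricDeriv2_pos (hK : 2 ≤ K) (hϖ : 0 < ϖ) (hϖ₂ : ϖ < 2) {β : ℝ}
    (hβ : β ∈ Icc 0 1) : 0 < milcStronglySymmetricDeriv2 K ϖ β := by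
  obtain ⟨hβ₀, hβ₁⟩ := hβ
  have hK₁ : (1 : ℝ) ≤ (K : ℝ) - 1 := by
    have : (2 : ℝ) ≤ K := by exact_mod_cast hK
    linarith
  have hcoef₁ : 0 < 2 - (1 - β) * ϖ := by nlinarith
  have hcoef₂ : 0 < 2 - ϖ * β / ((K : ℝ) - 1) := by
    have : ϖ * β / ((K : ℝ) - 1) ≤ ϖ * β := div_le_self (by positivity) hK₁
    nlinarith
  have : 0 < ϖ / ((K : ℝ) - 1) := by positivity
  unfold milcStronglySymmetricDeriv2
  positivity

lemma strictConvexOn_milcStronglySymmetric (hK : 2 ≤ K) (hϖ : 0 < ϖ) (hϖ₂ : ϖ < 2) :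
    StrictConvexOn ℝ (Icc 0 1) (milcStronglySymmetric K ϖ) := by
  refine strictConvexOn_of_deriv2_pos (convex_Icc 0 1)
    (fun β _ => (hasDerivAt_milcStronglySymmetric K ϖ β).continuousAt.continuousWithinAt)
    fun β hβ => ?_
  rw [interior_Icc] at hβ
  rw [Function.iterate_succ_apply, Function.iterate_one, deriv_deriv_milcStronglySymmetric]
  exact milcStronglySymmetricDeriv2_pos hK hϖ hϖ₂ (Ioo_subset_Icc_self hβ)

lemma milcStronglySymmetric_sub_one_div_self (hK : 2 ≤ K) :
    milcStronglySymmetric K ϖ (((K : ℝ) - 1) / K) = 0 := by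
  have hK' : (1 : ℝ) < K := Nat.one_lt_cast.2 hK
  rw [milcStronglySymmetric, sub_one_div_div_sub_one (by positivity) (sub_pos.2 hK').ne',
    sub_sub_cancel, mul_div_assoc]
  ring

lemma milcStronglySymmetricDeriv_sub_one_div_self (hK : 2 ≤ K) :
    milcStronglySymmetricDeriv K ϖ (((K : ℝ) - 1) / K) = 0 := by
  have hK' : (1 : ℝ) < K := Nat.one_lt_cast.2 hK
  rw [milcStronglySymmetricDeriv, mul_div_right_comm,
    sub_one_div_div_sub_one (by positivity) (sub_pos.2 hK').ne', sub_sub_cancel]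
  ring

lemma isMinOn_milcStronglySymmetric (hK : 2 ≤ K) (hϖ : 0 < ϖ) (hϖ₂ : ϖ < 2) :
    IsMinOn (milcStronglySymmetric K ϖ) (Icc 0 1) (((K : ℝ) - 1) / K) := by
  have hK' : (1 : ℝ) < K := Nat.one_lt_cast.2 hK
  have hmem : ((K : ℝ) - 1) / K ∈ interior (Icc (0 : ℝ) 1) := by
    rw [interior_Icc]
    exact ⟨div_pos (by linarith) (by linarith), (div_lt_one (by linarith)).2 (by linarith)⟩
  refine (strictConvexOn_milcStronglySymmetric hK hϖ hϖ₂).convexOn.isMinOn_of_rightDeriv_eq_zero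
    hmem ?_
  rw [(hasDerivAt_milcStronglySymmetric K ϖ _).hasDerivWithinAt.derivWithin
    (uniqueDiffWithinAt_Ioi _)]
  exact milcStronglySymmetricDeriv_sub_one_div_self hK

end

/-- For `K ≥ 2` and `0 < ϖ < 2`, the capacity
`C(ϖ,β) = exp(ϖ(K−1)/K) − (1−β)·exp(ϖβ) − β·exp(ϖ(1−β/(K−1)))` has positive second
derivative in `β` on `[0,1]` (namely
`ϖ(2−(1−β)ϖ)·exp(ϖβ) + (ϖ/(K−1))·(2 − ϖβ/(K−1))·exp(ϖ(1−β/(K−1)))`), is strictly convex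
in `β` on `[0,1]`, and attains its minimum value `0` at `β = (K−1)/K`. -/
theorem milc_strongly_symmetric_convex_in_beta (K : ℕ) (hK : 2 ≤ K) (ϖ : ℝ)
    (hϖ : 0 < ϖ) (hϖ2 : ϖ < 2) :
    (∀ β ∈ Set.Icc (0:ℝ) 1,
      deriv (deriv (fun β : ℝ => milcStronglySymmetric K ϖ β)) β
          = ϖ * (2 - (1 - β) * ϖ) * Real.exp (ϖ * β)
            + (ϖ / ((K : ℝ) - 1)) * (2 - ϖ * β / ((K : ℝ) - 1)) *
                Real.exp (ϖ * (1 - β / ((K : ℝ) - 1))) ∧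
      0 < ϖ * (2 - (1 - β) * ϖ) * Real.exp (ϖ * β)
            + (ϖ / ((K : ℝ) - 1)) * (2 - ϖ * β / ((K : ℝ) - 1)) *
                Real.exp (ϖ * (1 - β / ((K : ℝ) - 1)))) ∧
    StrictConvexOn ℝ (Set.Icc (0:ℝ) 1) (fun β : ℝ => milcStronglySymmetric K ϖ β) ∧
    IsMinOn (fun β : ℝ => milcStronglySymmetric K ϖ β) (Set.Icc (0:ℝ) 1)
      (((K : ℝ) - 1) / K) ∧
    milcStronglySymmetric K ϖ (((K : ℝ) - 1) / K) = 0 :=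
  ⟨fun β hβ => ⟨congrFun (deriv_deriv_milcStronglySymmetric K ϖ) β,
      milcStronglySymmetricDeriv2_pos hK hϖ hϖ2 hβ⟩,
    strictConvexOn_milcStronglySymmetric hK hϖ hϖ2, isMinOn_milcStronglySymmetric hK hϖ hϖ2,
    milcStronglySymmetric_sub_one_div_self hK⟩
end

section
/- Let X take n values with probabilities p(xᵢ) > 0 for all i, let the distortion function satisfy d(x,x) = 0 and d(x,y) > 0 for x ≠ y, and let 0 < ϖ ≤ 2. Then at allowable distortion D = 0, the only transfer matrices with average distortion 0 are those for which Y = X almost surely, the conditional message importance measure satisfies L(ϖ,X|X) = Σᵢ p(xᵢ)·1·exp(ϖ(1−1)) = 1, and hence the message importance distortion function satisfies R_ϖ(0) = L(ϖ,X) − 1. -/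
/-!
The average distortion is a sum of nonnegative terms `p(xᵢ) p(yⱼ|xᵢ) d(xᵢ,yⱼ)`, so at
distortion `0` every off-diagonal transition has probability zero and the channel is the
identity. The feasible set defining `R_ϖ(0)` is then a single channel, and for it each
posterior `p(xᵢ|yⱼ)` is `0` or `1`, making the CMIM equal to `∑ᵢ p(xᵢ) = 1`.
-/
open Finset

/-- Message importance measure (MIM) of a distribution with parameter `ϖ`. -/
noncomputable def MIM (ϖ : ℝ) {n : ℕ} (p : Fin n → ℝ) : ℝ :=
  ∑ i, p i * Real.exp (ϖ * (1 - p i))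

/-- Conditional message importance measure (CMIM) of the output of channel `W` fed with
input distribution `px`:
`L(ϖ,X|Y) = ∑ⱼ p(yⱼ) ∑ᵢ p(xᵢ|yⱼ)·exp(ϖ(1−p(xᵢ|yⱼ)))` where
`p(yⱼ) = ∑ᵢ p(xᵢ) p(yⱼ|xᵢ)` and `p(xᵢ|yⱼ) = p(xᵢ) p(yⱼ|xᵢ) / p(yⱼ)`. -/
noncomputable def CMIM (ϖ : ℝ) {m n : ℕ} (px : Fin m → ℝ) (W : Fin m → Fin n → ℝ) : ℝ :=
  ∑ j, (∑ i, px i * W i j) *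
    ∑ i, (px i * W i j / ∑ k, px k * W k j) *
      Real.exp (ϖ * (1 - px i * W i j / ∑ k, px k * W k j))

/-- `W` is a transfer matrix (channel): nonnegative entries, rows summing to 1. -/
def IsChannel {m n : ℕ} (W : Fin m → Fin n → ℝ) : Prop :=
  (∀ i j, 0 ≤ W i j) ∧ ∀ i, ∑ j, W i j = 1

/-- Average distortion `D̄ = ∑ᵢⱼ p(xᵢ) p(yⱼ|xᵢ) d(xᵢ,yⱼ)`. -/
noncomputable def avgDist {m n : ℕ} (px : Fin m → ℝ) (d W : Fin m → Fin n → ℝ) : ℝ :=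
  ∑ i, ∑ j, px i * W i j * d i j

/-- Message importance distortion function: the least message importance loss
`L(ϖ,X) − L(ϖ,X|Y)` over transfer matrices with average distortion at most `D`. -/
noncomputable def RD (ϖ : ℝ) {m n : ℕ} (px : Fin m → ℝ) (d : Fin m → Fin n → ℝ)
    (D : ℝ) : ℝ :=
  sInf {r : ℝ | ∃ W : Fin m → Fin n → ℝ,
    IsChannel W ∧ avgDist px d W ≤ D ∧ r = MIM ϖ px - CMIM ϖ px W}


/-- The noiseless channel `Y = X`. -/
def identityChannel (n : ℕ) : Fin n → Fin n → ℝ := fun i j => if i = j then 1 else 0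

theorem isChannel_identityChannel (n : ℕ) : IsChannel (identityChannel n) :=
  ⟨fun i j => by unfold identityChannel; split_ifs <;> norm_num, fun i => by simp [identityChannel]⟩

theorem avgDist_identityChannel {n : ℕ} (px : Fin n → ℝ) {d : Fin n → Fin n → ℝ}
    (hd0 : ∀ i, d i i = 0) : avgDist px d (identityChannel n) = 0 := by
  simp [avgDist, identityChannel, hd0]

/-- Each output `j` of the noiseless channel determines the input, so it contributes
`p(xⱼ)·1·exp(ϖ(1−1)) = p(xⱼ)`; when `p(xⱼ) = 0` both sides vanish. -/
theorem CMIM_identityChannel (ϖ : ℝ) {n : ℕ} (px : Fin n → ℝ) :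
    CMIM ϖ px (identityChannel n) = ∑ i, px i := by
  refine Finset.sum_congr rfl fun j _ => ?_
  rcases eq_or_ne (px j) 0 with h | h
  · simp [identityChannel, h]
  · have hcol : ∑ i, px i * identityChannel n i j = px j := by simp [identityChannel]
    rw [hcol, Finset.sum_eq_single j (fun i _ hi => by simp [identityChannel, hi]) (by simp)]
    simp [identityChannel, h]

theorem avgDist_nonneg {m n : ℕ} {px : Fin m → ℝ} {d W : Fin m → Fin n → ℝ}
    (hpx : ∀ i, 0 ≤ px i) (hW : ∀ i j, 0 ≤ W i j) (hd : ∀ i j, 0 ≤ d i j) :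
    0 ≤ avgDist px d W :=
  Finset.sum_nonneg fun i _ => Finset.sum_nonneg fun j _ =>
    mul_nonneg (mul_nonneg (hpx i) (hW i j)) (hd i j)

theorem eq_zero_of_avgDist_eq_zero {m n : ℕ} {px : Fin m → ℝ} {d W : Fin m → Fin n → ℝ}
    (hpx : ∀ i, 0 < px i) (hW : ∀ i j, 0 ≤ W i j) (hd : ∀ i j, 0 ≤ d i j)
    (havg : avgDist px d W = 0) {i : Fin m} {j : Fin n} (hdij : d i j ≠ 0) : W i j = 0 := by
  have hterm : ∀ i j, 0 ≤ px i * W i j * d i j := fun i j =>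
    mul_nonneg (mul_nonneg (hpx i).le (hW i j)) (hd i j)
  have hrow : ∑ j, px i * W i j * d i j = 0 :=
    (Finset.sum_eq_zero_iff_of_nonneg fun i _ => Finset.sum_nonneg fun j _ => hterm i j).mp
      havg i (Finset.mem_univ i)
  have hij : px i * W i j * d i j = 0 :=
    (Finset.sum_eq_zero_iff_of_nonneg fun j _ => hterm i j).mp hrow j (Finset.mem_univ j)
  simpa [(hpx i).ne', hdij] using hij

theorem IsChannel.eq_identityChannel {n : ℕ} {W : Fin n → Fin n → ℝ} (hW : IsChannel W)
    (hoff : ∀ i j, i ≠ j → W i j = 0) : W = identityChannel n := by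
  funext i j
  have hdiag : W i i = 1 := by
    rw [← hW.2 i, Finset.sum_eq_single i (fun b _ hb => hoff i b hb.symm) (by simp)]
  by_cases h : i = j
  · subst h; simp [identityChannel, hdiag]
  · simp [identityChannel, h, hoff i j h]

theorem isChannel_and_avgDist_nonpos_iff {n : ℕ} {px : Fin n → ℝ} {d W : Fin n → Fin n → ℝ}
    (hpx : ∀ i, 0 < px i) (hd0 : ∀ i, d i i = 0) (hdpos : ∀ i j, i ≠ j → 0 < d i j) :
    IsChannel W ∧ avgDist px d W ≤ 0 ↔ W = identityChannel n := by
  have hd : ∀ i j, 0 ≤ d i j := fun i j => by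
    rcases eq_or_ne i j with rfl | h
    · exact (hd0 i).ge
    · exact (hdpos i j h).le
  constructor
  · rintro ⟨hW, havg⟩
    have havg0 := le_antisymm havg (avgDist_nonneg (fun i => (hpx i).le) hW.1 hd)
    exact hW.eq_identityChannel fun i j hij =>
      eq_zero_of_avgDist_eq_zero hpx hW.1 hd havg0 (hdpos i j hij).ne'
  · rintro rfl
    exact ⟨isChannel_identityChannel n, (avgDist_identityChannel px hd0).le⟩

theorem rd_at_zero_distortion_general (n : ℕ) (ϖ : ℝ)
    (px : Fin n → ℝ) (hpx : ∀ i, 0 < px i) (hsum : ∑ i, px i = 1)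
    (d : Fin n → Fin n → ℝ) (hd0 : ∀ i, d i i = 0) (hdpos : ∀ i j, i ≠ j → 0 < d i j) :
    (∀ W : Fin n → Fin n → ℝ, IsChannel W → avgDist px d W = 0 →
        ∀ i j, i ≠ j → W i j = 0) ∧
    CMIM ϖ px (fun i j => if i = j then 1 else 0) = 1 ∧
    RD ϖ px d 0 = MIM ϖ px - 1 := by
  have hCMIM : CMIM ϖ px (identityChannel n) = 1 := (CMIM_identityChannel ϖ px).trans hsum
  refine ⟨fun W hW havg i j hij => ?_, hCMIM, ?_⟩
  · rw [(isChannel_and_avgDist_nonpos_iff hpx hd0 hdpos).mp ⟨hW, havg.le⟩]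
    simp [identityChannel, hij]
  · have hset : {r : ℝ | ∃ W : Fin n → Fin n → ℝ,
        IsChannel W ∧ avgDist px d W ≤ 0 ∧ r = MIM ϖ px - CMIM ϖ px W} = {MIM ϖ px - 1} := by
      ext r
      simp only [Set.mem_ofPred_eq, Set.mem_singleton_iff, ← and_assoc,
        isChannel_and_avgDist_nonpos_iff hpx hd0 hdpos, exists_eq_left, hCMIM]
    rw [RD, hset, csInf_singleton]

/-- For a source `X` with all probabilities positive, a distortion function
with `d(x,x) = 0` and `d(x,y) > 0` for `x ≠ y`, and `0 < ϖ ≤ 2`: the only transfer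
matrices with average distortion `0` are those with `Y = X` almost surely, the CMIM of the
identity channel equals `∑ᵢ p(xᵢ)·1·exp(ϖ(1−1)) = 1`, and hence `R_ϖ(0) = L(ϖ,X) − 1`. -/
theorem rd_at_zero_distortion (n : ℕ) (ϖ : ℝ) (hϖ : 0 < ϖ) (hϖ2 : ϖ ≤ 2)
    (px : Fin n → ℝ) (hpx : ∀ i, 0 < px i) (hsum : ∑ i, px i = 1)
    (d : Fin n → Fin n → ℝ) (hd0 : ∀ i, d i i = 0) (hdpos : ∀ i j, i ≠ j → 0 < d i j) :
    (∀ W : Fin n → Fin n → ℝ, IsChannel W → avgDist px d W = 0 →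
        ∀ i j, i ≠ j → W i j = 0) ∧
    CMIM ϖ px (fun i j => if i = j then 1 else 0) = 1 ∧
    RD ϖ px d 0 = MIM ϖ px - 1 :=
  rd_at_zero_distortion_general n ϖ px hpx hsum d hd0 hdpos
end

section
/- Let X be a Bernoulli(p) source with distribution (p, 1−p), let the distortion function be Hamming distortion (d(x,y) = 0 if x = y, 1 otherwise), let 0 ≤ D ≤ min{p, 1−p} with D < 1/2, and suppose 0 < ϖ ≤ 2·(minⱼ p(yⱼ))/(maxᵢ p(xᵢ)) for the optimal output distribution. Then the message importance distortion function equals R_ϖ(D) = [p·exp(ϖ(1−p)) + (1−p)·exp(ϖp)] − [D·exp(ϖ(1−D)) + (1−D)·exp(ϖD)], and it is achieved by the transfer matrix p(y=1|x=0) = (1−p−D)D/(p(1−2D)), p(y=0|x=0) = (1−D)(p−D)/(p(1−2D)), p(y=0|x=1) = D(p−D)/((1−p)(1−2D)), p(y=1|x=1) = (1−p−D)(1−D)/((1−p)(1−2D)). -/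
/-!
Let `g(t) = t e^{ϖ(1-t)} + (1-t) e^{ϖt}` (`binMIM ϖ t`) be the MIM of a Bernoulli(`t`) law; the
CMIM of a binary channel is `∑ⱼ p(yⱼ) g(p(error | yⱼ))`. For `0 ≤ ϖ ≤ 2` the function `g` is
concave on `[0, 1]`, and being symmetric about `1/2` it is increasing on `[0, 1/2]`; Jensen's
inequality over the outputs then bounds the CMIM by `g(D̄) ≤ g(D)`, since the mean error
probability is the average distortion `D̄`. Equality is attained when the reverse channel
from `Y` to `X` is the binary symmetric channel with crossover `D`, which is what the stated
transfer matrix realises.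
-/

open Finset

open Real Set

noncomputable def binMIM (ϖ t : ℝ) : ℝ :=
  t * exp (ϖ * (1 - t)) + (1 - t) * exp (ϖ * t)

section binMIM

variable (ϖ : ℝ)

lemma binMIM_one_sub (t : ℝ) : binMIM ϖ (1 - t) = binMIM ϖ t := by
  simp only [binMIM, sub_sub_cancel]; ring

lemma MIM_pair (p : ℝ) : MIM ϖ ![p, 1 - p] = binMIM ϖ p := by
  simp [MIM, binMIM]

lemma hasDerivAt_binMIM (t : ℝ) :
    HasDerivAt (binMIM ϖ)
      ((1 - ϖ * t) * exp (ϖ * (1 - t)) - (1 - ϖ * (1 - t)) * exp (ϖ * t)) t := by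
  have h := ((hasDerivAt_id t).mul ((((hasDerivAt_id t).const_sub 1).const_mul ϖ).exp)).add
    (((hasDerivAt_id t).const_sub 1).mul (((hasDerivAt_id t).const_mul ϖ).exp))
  refine h.congr_deriv ?_
  simp only [id]; ring

lemma hasDerivAt_deriv_binMIM (t : ℝ) :
    HasDerivAt (fun s => (1 - ϖ * s) * exp (ϖ * (1 - s)) - (1 - ϖ * (1 - s)) * exp (ϖ * s))
      (-(ϖ * ((2 - ϖ * t) * exp (ϖ * (1 - t)) + (2 - ϖ * (1 - t)) * exp (ϖ * t)))) t := by
  have h := ((((hasDerivAt_id t).const_mul ϖ).const_sub 1).mul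
      ((((hasDerivAt_id t).const_sub 1).const_mul ϖ).exp)).sub
    (((((hasDerivAt_id t).const_sub 1).const_mul ϖ).const_sub 1).mul
      (((hasDerivAt_id t).const_mul ϖ).exp))
  refine h.congr_deriv ?_
  simp only [id]; ring

variable {ϖ}

lemma concaveOn_binMIM (h0 : 0 ≤ ϖ) (h2 : ϖ ≤ 2) : ConcaveOn ℝ (Icc 0 1) (binMIM ϖ) := by
  refine concaveOn_of_hasDerivWithinAt2_nonpos (convex_Icc 0 1)
    (fun t _ => (hasDerivAt_binMIM ϖ t).continuousAt.continuousWithinAt)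
    (fun t _ => (hasDerivAt_binMIM ϖ t).hasDerivWithinAt)
    (fun t _ => (hasDerivAt_deriv_binMIM ϖ t).hasDerivWithinAt) ?_
  intro t ht
  obtain ⟨ht0, ht1⟩ := interior_subset ht
  have h2t : 0 ≤ 2 - ϖ * t := by nlinarith
  have h2t' : 0 ≤ 2 - ϖ * (1 - t) := by nlinarith
  exact neg_nonpos.2 <| mul_nonneg h0 <|
    add_nonneg (mul_nonneg h2t (exp_pos _).le) (mul_nonneg h2t' (exp_pos _).le)

lemma monotoneOn_binMIM (h0 : 0 ≤ ϖ) (h2 : ϖ ≤ 2) : MonotoneOn (binMIM ϖ) (Icc 0 (1 / 2)) := by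
  rintro s ⟨hs0, hs⟩ t ⟨-, ht⟩ hst
  -- `t` lies between `s` and `1 - s`, where `binMIM` takes the same value.
  have hseg : t ∈ segment ℝ s (1 - s) := by
    rw [segment_eq_Icc (by linarith)]; constructor <;> linarith
  simpa [binMIM_one_sub] using
    (concaveOn_binMIM h0 h2).ge_on_segment ⟨hs0, by linarith⟩ ⟨by linarith, by linarith⟩ hseg

end binMIM

section CMIM

variable (ϖ : ℝ)

lemma add_mul_binMIM_div (a b : ℝ) :
    (a + b) * (a / (a + b) * exp (ϖ * (1 - a / (a + b))) +
      b / (a + b) * exp (ϖ * (1 - b / (a + b)))) = (a + b) * binMIM ϖ (b / (a + b)) := by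
  rcases eq_or_ne (a + b) 0 with h | h
  · simp [h]
  · have ha : a / (a + b) = 1 - b / (a + b) := by field_simp; ring
    rw [ha, binMIM, sub_sub_cancel]; ring

lemma CMIM_fin_two_inputs {n : ℕ} (px : Fin 2 → ℝ) (W : Fin 2 → Fin n → ℝ) :
    CMIM ϖ px W = ∑ j, (∑ i, px i * W i j) * binMIM ϖ (px 1 * W 1 j / ∑ i, px i * W i j) := by
  simp only [CMIM, Fin.sum_univ_two, add_mul_binMIM_div]

lemma avgDist_hamming_fin_two (px : Fin 2 → ℝ) (W : Fin 2 → Fin 2 → ℝ) :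
    avgDist px (fun i j => if i = j then 0 else 1) W = px 0 * W 0 1 + px 1 * W 1 0 := by
  simp [avgDist, Fin.sum_univ_two]

variable {ϖ}

lemma add_mul_binMIM_add_le (h0 : 0 ≤ ϖ) (h2 : ϖ ≤ 2) {a₀ b₀ a₁ b₁ D : ℝ}
    (ha₀ : 0 ≤ a₀) (hb₀ : 0 ≤ b₀) (ha₁ : 0 ≤ a₁) (hb₁ : 0 ≤ b₁)
    (hsum : a₀ + b₀ + (a₁ + b₁) = 1) (hD : b₀ + a₁ ≤ D) (hD2 : D ≤ 1 / 2) :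
    (a₀ + b₀) * binMIM ϖ (b₀ / (a₀ + b₀)) + (a₁ + b₁) * binMIM ϖ (b₁ / (a₁ + b₁))
      ≤ binMIM ϖ D := by
  have hmem : ∀ {a b : ℝ}, 0 ≤ a → 0 ≤ b → b / (a + b) ∈ Icc (0 : ℝ) 1 := fun ha hb =>
    ⟨div_nonneg hb (add_nonneg ha hb),
      div_le_one_of_le₀ (le_add_of_nonneg_left ha) (add_nonneg ha hb)⟩
  have hcancel : ∀ {a b : ℝ}, 0 ≤ a → 0 ≤ b → (a + b) * (b / (a + b)) = b := fun ha hb =>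
    mul_div_cancel_of_imp' fun h => by linarith
  -- On the second output the error is the event `X = 0`, hence the reflection `t ↦ 1 - t`.
  have hmass : (a₀ + b₀) * (b₀ / (a₀ + b₀)) + (a₁ + b₁) * (1 - b₁ / (a₁ + b₁)) = b₀ + a₁ := by
    rw [mul_one_sub, hcancel ha₀ hb₀, hcancel ha₁ hb₁]; ring
  have hmem₁ : 1 - b₁ / (a₁ + b₁) ∈ Icc (0 : ℝ) 1 := by
    obtain ⟨h, h'⟩ := hmem ha₁ hb₁; constructor <;> linarith
  calc (a₀ + b₀) * binMIM ϖ (b₀ / (a₀ + b₀)) + (a₁ + b₁) * binMIM ϖ (b₁ / (a₁ + b₁))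
      = (a₀ + b₀) * binMIM ϖ (b₀ / (a₀ + b₀)) + (a₁ + b₁) * binMIM ϖ (1 - b₁ / (a₁ + b₁)) := by
        rw [binMIM_one_sub]
    _ ≤ binMIM ϖ (b₀ + a₁) := by
        rw [← hmass]
        exact (concaveOn_binMIM h0 h2).2 (hmem ha₀ hb₀) hmem₁ (add_nonneg ha₀ hb₀)
          (add_nonneg ha₁ hb₁) hsum
    _ ≤ binMIM ϖ D := monotoneOn_binMIM h0 h2 ⟨add_nonneg hb₀ ha₁, by linarith⟩
        ⟨by linarith [add_nonneg hb₀ ha₁], hD2⟩ hD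

lemma CMIM_le_binMIM_of_avgDist_le (h0 : 0 ≤ ϖ) (h2 : ϖ ≤ 2) {px : Fin 2 → ℝ}
    (hpx : ∀ i, 0 ≤ px i) (hpx1 : ∑ i, px i = 1) {W : Fin 2 → Fin 2 → ℝ} (hW : IsChannel W)
    {D : ℝ} (hdist : avgDist px (fun i j => if i = j then 0 else 1) W ≤ D) (hD2 : D ≤ 1 / 2) :
    CMIM ϖ px W ≤ binMIM ϖ D := by
  obtain ⟨hW0, hW1⟩ := hW
  have hjoint_nonneg : ∀ i j, 0 ≤ px i * W i j := fun i j => mul_nonneg (hpx i) (hW0 i j)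
  have hrow : ∀ i, W i 0 + W i 1 = 1 := fun i => by simpa [Fin.sum_univ_two] using hW1 i
  rw [Fin.sum_univ_two] at hpx1
  rw [avgDist_hamming_fin_two] at hdist
  rw [CMIM_fin_two_inputs, Fin.sum_univ_two, Fin.sum_univ_two, Fin.sum_univ_two]
  exact add_mul_binMIM_add_le h0 h2 (hjoint_nonneg 0 0) (hjoint_nonneg 1 0)
    (hjoint_nonneg 0 1) (hjoint_nonneg 1 1)
    (by linear_combination px 0 * hrow 0 + px 1 * hrow 1 + hpx1) (by linarith) hD2

end CMIM

section ReverseBSC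

variable {px : Fin 2 → ℝ} {W : Fin 2 → Fin 2 → ℝ} {D : ℝ} {r : Fin 2 → ℝ}

/-- `hjoint` says that `Y` has law `r` and that the reverse channel `Y → X` is binary symmetric
with crossover probability `D`. -/
lemma CMIM_eq_of_joint_eq (ϖ : ℝ)
    (hjoint : ∀ i j, px i * W i j = (if i = j then 1 - D else D) * r j) :
    CMIM ϖ px W = (r 0 + r 1) * binMIM ϖ D := by
  have hcancel : ∀ c s : ℝ, s * binMIM ϖ (c * s / s) = s * binMIM ϖ c := fun c s => by
    rcases eq_or_ne s 0 with hs | hs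
    · simp [hs]
    · rw [mul_div_cancel_right₀ c hs]
  have hout : ∀ j, ∑ i, px i * W i j = r j := fun j => by
    fin_cases j <;>
      simp only [Fin.zero_eta, Fin.mk_one, Fin.isValue, Fin.sum_univ_two, hjoint, ite_mul,
        zero_ne_one, one_ne_zero, ↓reduceIte] <;>
      ring
  rw [CMIM_fin_two_inputs, Fin.sum_univ_two, hout, hout, hjoint, hjoint]
  simp only [Fin.isValue, one_ne_zero, if_true, if_false, hcancel, binMIM_one_sub]
  ring

lemma avgDist_hamming_eq_of_joint_eq
    (hjoint : ∀ i j, px i * W i j = (if i = j then 1 - D else D) * r j) :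
    avgDist px (fun i j => if i = j then 0 else 1) W = D * (r 0 + r 1) := by
  simp only [avgDist_hamming_fin_two, Fin.isValue, hjoint, zero_ne_one, one_ne_zero, ↓reduceIte]
  ring

end ReverseBSC

section Bernoulli

variable {p D : ℝ}

noncomputable def bernoulliHammingChannel (p D : ℝ) : Fin 2 → Fin 2 → ℝ :=
  ![![(1 - D) * (p - D) / (p * (1 - 2*D)), (1 - p - D) * D / (p * (1 - 2*D))],
    ![D * (p - D) / ((1 - p) * (1 - 2*D)), (1 - p - D) * (1 - D) / ((1 - p) * (1 - 2*D))]]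

lemma joint_bernoulliHammingChannel (hp0 : 0 < p) (hp1 : p < 1) (hD : D < 1 / 2) (i j : Fin 2) :
    ![p, 1 - p] i * bernoulliHammingChannel p D i j =
      (if i = j then 1 - D else D) * ![(p - D) / (1 - 2*D), (1 - p - D) / (1 - 2*D)] j := by
  have : 1 - p ≠ 0 := by linarith
  have : 1 - 2 * D ≠ 0 := by linarith
  fin_cases i <;> fin_cases j <;>
    simp only [bernoulliHammingChannel, Fin.zero_eta, Fin.mk_one, Fin.isValue, Matrix.cons_val',
      Matrix.cons_val_zero, Matrix.cons_val_one, Matrix.cons_val_fin_one, zero_ne_one, one_ne_zero,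
      ↓reduceIte] <;>
    field_simp

lemma isChannel_bernoulliHammingChannel (hp0 : 0 < p) (hp1 : p < 1) (hD0 : 0 ≤ D)
    (hDp : D ≤ p) (hDq : D ≤ 1 - p) (hD : D < 1 / 2) :
    IsChannel (bernoulliHammingChannel p D) := by
  have hp : p * (1 - 2 * D) ≠ 0 := mul_ne_zero hp0.ne' (by linarith)
  have hq : (1 - p) * (1 - 2 * D) ≠ 0 := mul_ne_zero (by linarith) (by linarith)
  refine ⟨fun i j => ?_, fun i => ?_⟩
  · fin_cases i <;> fin_cases j <;>
      simp only [bernoulliHammingChannel, Fin.zero_eta, Fin.mk_one, Matrix.cons_val_zero,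
        Matrix.cons_val_one] <;>
      exact div_nonneg (mul_nonneg (by linarith) (by linarith))
        (mul_nonneg (by linarith) (by linarith))
  · fin_cases i <;>
      simp only [bernoulliHammingChannel, Fin.sum_univ_two, Fin.zero_eta, Fin.mk_one,
        Matrix.cons_val_zero, Matrix.cons_val_one] <;>
      rw [← add_div, div_eq_one_iff_eq (by assumption)] <;> ring

end Bernoulli

lemma two_mul_min_div_max_le_two {a b u v : ℝ} (hab : a + b = 1) (huv : u + v = 1) :
    2 * min a b / max u v ≤ 2 := by
  have hmax : 1 / 2 ≤ max u v := by
    rcases le_total u v with h | h <;> simp [h] <;> linarith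
  rw [div_le_iff₀ (by linarith)]
  nlinarith [min_le_left a b, min_le_right a b]

/-- Message importance distortion function of a Bernoulli(`p`) source under
Hamming distortion. For `0 ≤ D ≤ min{p, 1−p}`, `D < 1/2`, and
`0 < ϖ ≤ 2·(minⱼ p(yⱼ))/(maxᵢ p(xᵢ))` for the optimal output distribution
`((p−D)/(1−2D), (1−p−D)/(1−2D))`:
`R_ϖ(D) = [p·exp(ϖ(1−p)) + (1−p)·exp(ϖp)] − [D·exp(ϖ(1−D)) + (1−D)·exp(ϖD)]`, and it is
achieved by the stated transfer matrix. -/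
theorem rd_bernoulli_hamming (ϖ p D : ℝ) (hp0 : 0 < p) (hp1 : p < 1)
    (hD0 : 0 ≤ D) (hDp : D ≤ min p (1 - p)) (hDhalf : D < 1/2)
    (hϖ : 0 < ϖ)
    (hϖ2 : ϖ ≤ 2 * min ((p - D) / (1 - 2*D)) ((1 - p - D) / (1 - 2*D))
        / max p (1 - p))
    (W : Fin 2 → Fin 2 → ℝ)
    (hW : W = ![![(1 - D) * (p - D) / (p * (1 - 2*D)),
                  (1 - p - D) * D / (p * (1 - 2*D))],
                ![D * (p - D) / ((1 - p) * (1 - 2*D)),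
                  (1 - p - D) * (1 - D) / ((1 - p) * (1 - 2*D))]]) :
    RD ϖ ![p, 1 - p] (fun i j => if i = j then 0 else 1) D
        = (p * Real.exp (ϖ * (1 - p)) + (1 - p) * Real.exp (ϖ * p))
          - (D * Real.exp (ϖ * (1 - D)) + (1 - D) * Real.exp (ϖ * D)) ∧
    IsChannel W ∧
    avgDist ![p, 1 - p] (fun i j => if i = j then 0 else 1) W ≤ D ∧
    MIM ϖ ![p, 1 - p] - CMIM ϖ ![p, 1 - p] W
        = RD ϖ ![p, 1 - p] (fun i j => if i = j then 0 else 1) D := by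
  obtain ⟨hDp, hDq⟩ := le_min_iff.1 hDp
  have hout : (p - D) / (1 - 2*D) + (1 - p - D) / (1 - 2*D) = 1 := by
    rw [← add_div, div_eq_one_iff_eq (by linarith)]; ring
  have hϖ2 : ϖ ≤ 2 := hϖ2.trans (two_mul_min_div_max_le_two hout (by ring))
  obtain rfl : W = bernoulliHammingChannel p D := hW
  have hjoint := joint_bernoulliHammingChannel hp0 hp1 hDhalf
  have hch := isChannel_bernoulliHammingChannel hp0 hp1 hD0 hDp hDq hDhalf
  have hdist := avgDist_hamming_eq_of_joint_eq hjoint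
  have hcmim := CMIM_eq_of_joint_eq ϖ hjoint
  simp only [Matrix.cons_val_zero, Matrix.cons_val_one, hout, mul_one, one_mul] at hdist hcmim
  have hRD : RD ϖ ![p, 1 - p] (fun i j => if i = j then 0 else 1) D
      = binMIM ϖ p - binMIM ϖ D := by
    refine IsLeast.csInf_eq ⟨⟨_, hch, hdist.le, by rw [MIM_pair, hcmim]⟩, ?_⟩
    rintro _ ⟨V, hV, hVdist, rfl⟩
    rw [MIM_pair]
    have := CMIM_le_binMIM_of_avgDist_le hϖ.le hϖ2
      (Fin.forall_fin_two.2 ⟨hp0.le, by simp; linarith⟩) (by simp) hV hVdist hDhalf.le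
    linarith
  exact ⟨hRD, hch, hdist.le, by rw [MIM_pair, hcmim, hRD]⟩
end
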